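/- (Stembridge) Let λ, μ be dominant weights of a simple Lie algebra with μ ≺ λ in dominance order. Then there is a chain of dominant weights μ = λ_k ≺ λ_{k−1} ≺ ⋯ ≺ λ_0 = λ in which each step is a cover relation, and every cover relation λ_{i+1} ≺ λ_i satisfies that λ_i − λ_{i+1} is a positive root. -/

import Mathlib

/-!
STATEMENT 16 (Stembridge): For a simple Lie algebra (encoded by an indecomposable
Cartan matrix of finite type `A`), and dominant weights `μ ≺ λ` in the dominance
order, there is a chain of dominant weights from `λ` down to `μ` in which each step
is a cover relation, and each cover step differs by a positive root.

We work in fundamental-weight coordinates: weights are `Fin n → ℤ`, the simple root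
`α_j` is the `j`-th column of `A`, dominance is coordinatewise nonnegativity, roots
are the Weyl group orbit of the simple roots, and `μ ⪯ λ` iff `λ − μ` is a
nonnegative integral combination of simple roots.
-/

section
variable {n : ℕ} (A : Matrix (Fin n) (Fin n) ℤ)

/-- The simple root `α_j` in fundamental-weight coordinates. -/
def colA (j : Fin n) : Fin n → ℤ := fun i => A i j

/-- The simple reflection `s_i` on the weight lattice. -/
def srefl (i : Fin n) : Function.End (Fin n → ℤ) := fun c => c - c i • colA A i

/-- `v` is a root iff it lies in the Weyl group orbit of a simple root. -/
def IsRoot (v : Fin n → ℤ) : Prop :=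
  ∃ f ∈ Submonoid.closure (Set.range (srefl A)), ∃ k, v = f (colA A k)

/-- `v` is a positive root. -/
def IsPosRoot (v : Fin n → ℤ) : Prop :=
  IsRoot A v ∧ ∃ m : Fin n → ℕ, v = ∑ j, (m j : ℤ) • colA A j

/-- A weight is dominant iff its fundamental-weight coordinates are nonnegative. -/
def IsDom (v : Fin n → ℤ) : Prop := ∀ i, 0 ≤ v i

/-- The dominance order. -/
def DomLE (μ lam : Fin n → ℤ) : Prop :=
  ∃ m : Fin n → ℕ, lam - μ = ∑ j, (m j : ℤ) • colA A j

/-- A cover relation in the restriction of the dominance order to dominant weights. -/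
def Covers (μ lam : Fin n → ℤ) : Prop :=
  IsDom μ ∧ IsDom lam ∧ DomLE A μ lam ∧ μ ≠ lam ∧
    ¬∃ ν : Fin n → ℤ, IsDom ν ∧ DomLE A μ ν ∧ DomLE A ν lam ∧ ν ≠ μ ∧ ν ≠ lam

end

/-!
Work in simple-root coordinates, where `c` has weight `A *ᵥ c`. Finite type provides an integral,
positive definite, Weyl-invariant form, so `A` is injective and the coefficients of `λ - μ` are
unique; strong induction on the height of `λ - μ` then refines `μ ≺ λ` into a chain of covers.
For a cover `μ ⋖ λ`, take a root `β` maximal among the roots with `0 ≤ β ≤ λ - μ`. If `μ + β`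
failed to be dominant at `i`, then `⟨β, α_i^∨⟩ < 0` and `β + α_i` would be a larger such root. So
`μ + β` is a dominant weight in `(μ, λ]`, hence equals `λ`, and `λ - μ = β` is a positive root.
-/

open Matrix

theorem Relation.TransGen.exists_seq {α : Type*} {r : α → α → Prop} {a b : α}
    (h : Relation.TransGen r a b) :
    ∃ (k : ℕ) (c : ℕ → α), 0 < k ∧ c 0 = a ∧ c k = b ∧ ∀ i < k, r (c i) (c (i + 1)) := by
  induction h using Relation.TransGen.head_induction_on with
  | @single a hab =>
    refine ⟨1, fun t => if t = 0 then a else b, one_pos, rfl, rfl, ?_⟩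
    intro i hi
    obtain rfl : i = 0 := by omega
    simpa using hab
  | @head a c hac _ ih =>
    obtain ⟨k, f, hk, hf0, hfk, hf⟩ := ih
    refine ⟨k + 1, fun t => Nat.casesOn t a f, k.succ_pos, rfl, hfk, ?_⟩
    rintro (_ | i) hi
    · simpa [hf0] using hac
    · exact hf i (by omega)

section CartanMatrix

variable {n : ℕ} (A : Matrix (Fin n) (Fin n) ℤ)

lemma sum_smul_colA (c : Fin n → ℤ) : ∑ j, c j • colA A j = A *ᵥ c := by
  ext i
  simp [colA, mulVec, dotProduct, mul_comm]

lemma exists_nat_mulVec_eq_sum {c : Fin n → ℤ} (hc : 0 ≤ c) :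
    ∃ m : Fin n → ℕ, A *ᵥ c = ∑ j, (m j : ℤ) • colA A j :=
  ⟨fun j => (c j).toNat, by simp_rw [Int.toNat_of_nonneg (hc _), sum_smul_colA]⟩

lemma domLE_iff {μ lam : Fin n → ℤ} : DomLE A μ lam ↔ ∃ m, 0 ≤ m ∧ lam - μ = A *ᵥ m := by
  refine ⟨fun ⟨m, hm⟩ => ⟨fun j => m j, fun j => by simp, by rw [hm, sum_smul_colA]⟩, ?_⟩
  rintro ⟨m, hm0, hm⟩
  obtain ⟨k, hk⟩ := exists_nat_mulVec_eq_sum A hm0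
  exact ⟨k, hm.trans hk⟩

lemma eq_of_sum_coeffs_eq_zero {μ lam : Fin n → ℤ} {m : Fin n → ℕ}
    (hm : lam - μ = ∑ j, (m j : ℤ) • colA A j) (h : ∑ j, m j = 0) : μ = lam := by
  simp_all [Finset.sum_eq_zero_iff, sub_eq_zero, eq_comm]

def simpleRefl (i : Fin n) : Module.End ℤ (Fin n → ℤ) :=
  LinearMap.id - ((LinearMap.proj i).comp A.mulVecLin).smulRight (Pi.single i 1)

lemma simpleRefl_apply (i : Fin n) (x : Fin n → ℤ) :
    simpleRefl A i x = x - (A *ᵥ x) i • Pi.single i 1 := rfl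

lemma mulVec_simpleRefl (i : Fin n) (x : Fin n → ℤ) :
    A *ᵥ simpleRefl A i x = srefl A i (A *ᵥ x) := by
  rw [simpleRefl_apply, mulVec_sub, mulVec_smul, mulVec_single_one]
  rfl

inductive IsRootCoeffs : (Fin n → ℤ) → Prop
  | single (k : Fin n) : IsRootCoeffs (Pi.single k 1)
  | reflect (i : Fin n) {x : Fin n → ℤ} : IsRootCoeffs x → IsRootCoeffs (simpleRefl A i x)

variable {A}

lemma IsRootCoeffs.isRoot {c : Fin n → ℤ} (h : IsRootCoeffs A c) : IsRoot A (A *ᵥ c) := by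
  induction h with
  | single k => exact ⟨1, one_mem _, k, by rw [mulVec_single_one]; rfl⟩
  | reflect i _ ih =>
    obtain ⟨f, hf, k, hk⟩ := ih
    exact ⟨srefl A i * f, mul_mem (Submonoid.subset_closure ⟨i, rfl⟩) hf, k,
      by rw [mulVec_simpleRefl, hk]; rfl⟩

lemma IsRootCoeffs.isPosRoot {c : Fin n → ℤ} (h : IsRootCoeffs A c) (hc : 0 ≤ c) :
    IsPosRoot A (A *ᵥ c) :=
  ⟨h.isRoot, exists_nat_mulVec_eq_sum A hc⟩

lemma simpleRefl_simpleRefl (hdiag : ∀ i, A i i = 2) (i : Fin n) (x : Fin n → ℤ) :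
    simpleRefl A i (simpleRefl A i x) = x := by
  have : (A *ᵥ simpleRefl A i x) i = -(A *ᵥ x) i := by
    rw [simpleRefl_apply, mulVec_sub, mulVec_smul, mulVec_single_one]
    simp only [Pi.sub_apply, Pi.smul_apply, col_apply, hdiag, smul_eq_mul]
    ring
  rw [simpleRefl_apply, this, simpleRefl_apply]
  simp

lemma mulVec_apply_le_two_mul (hdiag : ∀ i, A i i = 2) (hoff : ∀ i j, i ≠ j → A i j ≤ 0)
    {v : Fin n → ℤ} (hv : 0 ≤ v) (i : Fin n) : (A *ᵥ v) i ≤ 2 * v i := by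
  have : ∑ j ∈ Finset.univ.erase i, A i j * v j ≤ 0 :=
    Finset.sum_nonpos fun j hj =>
      mul_nonpos_of_nonpos_of_nonneg (hoff i j (Finset.ne_of_mem_erase hj).symm) (hv j)
  rw [mulVec, dotProduct, ← Finset.add_sum_erase _ _ (Finset.mem_univ i), hdiag]
  linarith

lemma linearIndependent_pair_single (hdiag : ∀ i, A i i = 2) {β : Fin n → ℤ} (hβ0 : 0 ≤ β)
    {i : Fin n} (hi : (A *ᵥ β) i < 0) : LinearIndependent ℤ ![β, Pi.single i 1] := by
  refine LinearIndependent.pair_iff.2 fun s u hsu => ?_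
  obtain rfl : s = 0 := by
    by_contra hs
    have hβ : β = β i • Pi.single i 1 := by
      ext j
      by_cases hj : j = i
      · simp [hj]
      · have := congrFun hsu j
        simp_all
    rw [hβ, mulVec_smul, mulVec_single_one] at hi
    simp only [Pi.smul_apply, col_apply, hdiag, smul_eq_mul] at hi
    linarith [show 0 ≤ β i from hβ0 i]
  simpa using congrFun hsu i

end CartanMatrix

section CartanForm

variable {n : ℕ} (A : Matrix (Fin n) (Fin n) ℤ) (d : Fin n → ℤ)

def cartanForm : LinearMap.BilinForm ℤ (Fin n → ℤ) :=
  Matrix.toLinearMap₂' ℤ (diagonal d * A)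

lemma cartanForm_apply (x y : Fin n → ℤ) :
    cartanForm A d x y = ∑ i, ∑ j, d i * A i j * x i * y j := by
  simp only [cartanForm, toLinearMap₂'_apply', dotProduct, mulVec, diagonal_mul, Finset.mul_sum]
  exact Finset.sum_congr rfl fun i _ => Finset.sum_congr rfl fun j _ => by ring

lemma cartanForm_single_left (i : Fin n) (y : Fin n → ℤ) :
    cartanForm A d (Pi.single i 1) y = d i * (A *ᵥ y) i := by
  simp [cartanForm, toLinearMap₂'_apply', ← mulVec_mulVec, mulVec_diagonal]

variable {A d}

lemma cartanForm_single_single (hdiag : ∀ i, A i i = 2) (i : Fin n) :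
    cartanForm A d (Pi.single i 1) (Pi.single i 1) = 2 * d i := by
  rw [cartanForm_single_left, mulVec_single_one]
  simp [hdiag, mul_comm]

lemma mulVec_injective_of_cartanForm_pos (hpos : ∀ x, x ≠ 0 → 0 < cartanForm A d x x) :
    Function.Injective (A *ᵥ ·) := by
  intro x y hxy
  by_contra hne
  have h := hpos (x - y) (sub_ne_zero.2 hne)
  simp [cartanForm, toLinearMap₂'_apply', ← mulVec_mulVec, mulVec_sub, hxy] at h

variable (hdiag : ∀ i, A i i = 2) (hB : (cartanForm A d).IsSymm)
include hdiag hB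

lemma cartanForm_simpleRefl (i : Fin n) (x y : Fin n → ℤ) :
    cartanForm A d (simpleRefl A i x) (simpleRefl A i y) = cartanForm A d x y := by
  simp only [simpleRefl_apply, map_sub, map_smul, LinearMap.sub_apply, LinearMap.smul_apply,
    smul_eq_mul, cartanForm_single_left, cartanForm_single_single hdiag, hB.eq x (Pi.single i 1)]
  ring

lemma cartanForm_simpleRefl_right (i : Fin n) (x y : Fin n → ℤ) :
    cartanForm A d x (simpleRefl A i y) = cartanForm A d (simpleRefl A i x) y := by
  rw [← cartanForm_simpleRefl hdiag hB i, simpleRefl_simpleRefl hdiag]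

end CartanForm

namespace IsRootCoeffs

variable {n : ℕ} {A : Matrix (Fin n) (Fin n) ℤ} {d : Fin n → ℤ}
  (hdiag : ∀ i, A i i = 2) (hB : (cartanForm A d).IsSymm)
include hdiag hB

lemma cartanForm_self_pos (hpos : ∀ x, x ≠ 0 → 0 < cartanForm A d x x) {β : Fin n → ℤ}
    (hβ : IsRootCoeffs A β) : 0 < cartanForm A d β β := by
  induction hβ with
  | single k => exact hpos _ (by simp)
  | reflect i _ ih => rwa [cartanForm_simpleRefl hdiag hB]

lemma ne_zero (hpos : ∀ x, x ≠ 0 → 0 < cartanForm A d x x) {β : Fin n → ℤ}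
    (hβ : IsRootCoeffs A β) : β ≠ 0 := by
  rintro rfl
  simpa using hβ.cartanForm_self_pos hdiag hB hpos

/-- Here `t = ⟨x, β^∨⟩`; the reflection `s_β` is conjugate to a simple reflection, which drives
the induction on `β`. -/
lemma exists_sub_smul {β x : Fin n → ℤ} (hβ : IsRootCoeffs A β) (hx : IsRootCoeffs A x) :
    ∃ t : ℤ, t * cartanForm A d β β = 2 * cartanForm A d x β ∧ IsRootCoeffs A (x - t • β) := by
  induction hβ generalizing x with
  | single k =>
    refine ⟨(A *ᵥ x) k, ?_, hx.reflect k⟩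
    rw [cartanForm_single_single hdiag, hB.eq x, cartanForm_single_left]
    ring
  | @reflect i γ _ ih =>
    obtain ⟨t, ht, hroot⟩ := ih (hx.reflect i)
    refine ⟨t, ?_, ?_⟩
    · rwa [cartanForm_simpleRefl hdiag hB, cartanForm_simpleRefl_right hdiag hB]
    · have : x - t • simpleRefl A i γ = simpleRefl A i (simpleRefl A i x - t • γ) := by
        rw [map_sub, map_smul, simpleRefl_simpleRefl hdiag]
      rw [this]
      exact hroot.reflect i

/-- Finite type enters here: by Cauchy–Schwarz, `⟨β, α_i^∨⟩ ⟨α_i, β^∨⟩ < 4`, so one of the two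
negative Cartan integers is `-1`, and `β + α_i` is `s_i β` or `s_β α_i`. -/
lemma add_single (hpos : ∀ x, x ≠ 0 → 0 < cartanForm A d x x) {β : Fin n → ℤ}
    (hβ : IsRootCoeffs A β) (hβ0 : 0 ≤ β) {i : Fin n} (hi : (A *ᵥ β) i < 0) :
    IsRootCoeffs A (β + Pi.single i 1) := by
  obtain ⟨t, ht, hroot⟩ := hβ.exists_sub_smul hdiag hB (.single i)
  rw [cartanForm_single_left] at ht
  have hββ := hβ.cartanForm_self_pos hdiag hB hpos
  have hdi : 0 < d i := by
    have := hpos (Pi.single i 1) (by simp)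
    rw [cartanForm_single_single hdiag] at this
    linarith
  have hcs := (LinearMap.BilinForm.apply_sq_lt_iff_linearIndependent_of_symm _ hpos
    (LinearMap.BilinForm.isSymm_iff.1 hB) β _).2 (linearIndependent_pair_single hdiag hβ0 hi)
  rw [hB.eq, cartanForm_single_left, cartanForm_single_single hdiag] at hcs
  have ht0 : t < 0 := by nlinarith
  have hprod : (A *ᵥ β) i * t < 4 := by
    have : (-(A *ᵥ β) i * d i ^ 2) * ((A *ᵥ β) i * t) < (-(A *ᵥ β) i * d i ^ 2) * 4 := by
      nlinarith [mul_pos (neg_pos.2 ht0) (sub_pos.2 hcs)]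
    exact lt_of_mul_lt_mul_left this (by nlinarith)
  obtain h | h : (A *ᵥ β) i = -1 ∨ t = -1 := by
    by_contra! h
    have : (A *ᵥ β) i ≤ -2 := by omega
    have : t ≤ -2 := by omega
    nlinarith
  · simpa [simpleRefl_apply, h] using hβ.reflect i
  · simpa [h, add_comm] using hroot

end IsRootCoeffs

section Dominance

variable {n : ℕ} {A : Matrix (Fin n) (Fin n) ℤ} {d : Fin n → ℤ}

theorem exists_isRootCoeffs_le_of_isDom (hdiag : ∀ i, A i i = 2)
    (hoff : ∀ i j, i ≠ j → A i j ≤ 0) (hB : (cartanForm A d).IsSymm)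
    (hpos : ∀ x, x ≠ 0 → 0 < cartanForm A d x x) {μ m : Fin n → ℤ} (hμ : IsDom μ) (hm0 : 0 ≤ m)
    (hm : m ≠ 0) (hμm : IsDom (μ + A *ᵥ m)) :
    ∃ β, IsRootCoeffs A β ∧ 0 ≤ β ∧ β ≤ m ∧ IsDom (μ + A *ᵥ β) := by
  set S := {β | IsRootCoeffs A β} ∩ Set.Icc 0 m
  have hSne : S.Nonempty := by
    obtain ⟨k, hk⟩ := Function.ne_iff.1 hm
    refine ⟨Pi.single k 1, .single k, Pi.single_nonneg.2 zero_le_one, fun j => ?_⟩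
    by_cases hj : j = k
    · subst hj
      have := hm0 j
      simp only [Pi.zero_apply, Pi.single_eq_same] at this hk ⊢
      omega
    · simpa [hj] using hm0 j
  obtain ⟨β, ⟨hβ, hβ0, hβm⟩, hmax⟩ :=
    ((Set.finite_Icc 0 m).subset Set.inter_subset_right).exists_maximal hSne
  refine ⟨β, hβ, hβ0, hβm, fun i => ?_⟩
  by_contra! hi
  have hμi := hμ i
  have hμmi := hμm i
  have hvi := mulVec_apply_le_two_mul hdiag hoff (sub_nonneg.2 hβm) i
  simp only [Pi.add_apply, mulVec_sub, Pi.sub_apply] at hi hμmi hvi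
  have hAβ : (A *ᵥ β) i < 0 := by linarith
  have hmem : β + Pi.single i 1 ∈ S := by
    refine ⟨hβ.add_single hdiag hB hpos hβ0 hAβ,
      add_nonneg hβ0 (Pi.single_nonneg.2 zero_le_one), fun j => ?_⟩
    by_cases hj : j = i
    · subst hj
      simp only [Pi.add_apply, Pi.single_eq_same]
      linarith
    · simpa [hj] using hβm j
  have := hmax hmem (le_add_of_nonneg_right (Pi.single_nonneg.2 zero_le_one)) i
  simp at this

theorem Covers.isPosRoot (hdiag : ∀ i, A i i = 2) (hoff : ∀ i j, i ≠ j → A i j ≤ 0)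
    (hB : (cartanForm A d).IsSymm) (hpos : ∀ x, x ≠ 0 → 0 < cartanForm A d x x)
    {μ lam : Fin n → ℤ} (h : Covers A μ lam) : IsPosRoot A (lam - μ) := by
  obtain ⟨hμ, hlam, hle, hne, hmin⟩ := h
  obtain ⟨m, hm0, hm⟩ := (domLE_iff A).1 hle
  have hm_ne : m ≠ 0 := by
    rintro rfl
    exact hne (by simpa [sub_eq_zero, eq_comm] using hm)
  obtain ⟨β, hβ, hβ0, hβm, hν⟩ := exists_isRootCoeffs_le_of_isDom hdiag hoff hB hpos hμ hm0 hm_ne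
    (by rwa [← hm, add_sub_cancel])
  have hνμ : μ + A *ᵥ β ≠ μ := by
    intro h
    apply hβ.ne_zero hdiag hB hpos
    apply mulVec_injective_of_cartanForm_pos hpos
    simpa using h
  have hνlam : μ + A *ᵥ β = lam := by
    by_contra hνlam
    refine hmin ⟨μ + A *ᵥ β, hν, (domLE_iff A).2 ⟨β, hβ0, by abel⟩,
      (domLE_iff A).2 ⟨m - β, sub_nonneg.2 hβm, ?_⟩, hνμ, hνlam⟩
    rw [mulVec_sub, ← hm]
    abel
  rw [← hνlam, add_sub_cancel_left]
  exact hβ.isPosRoot hβ0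

theorem transGen_covers_of_domLE (hA : Function.Injective (A *ᵥ ·)) {lam μ : Fin n → ℤ}
    (hlam : IsDom lam) (hμ : IsDom μ) (hle : DomLE A μ lam) (hne : μ ≠ lam) :
    Relation.TransGen (fun x y => Covers A y x) lam μ := by
  obtain ⟨m, hm⟩ := hle
  induction hs : ∑ j, m j using Nat.strong_induction_on generalizing lam μ m with
  | _ s ih =>
  by_cases hcov : Covers A μ lam
  · exact .single hcov
  obtain ⟨ν, hν, ⟨m₁, hm₁⟩, ⟨m₂, hm₂⟩, hνμ, hνlam⟩ :
      ∃ ν, IsDom ν ∧ DomLE A μ ν ∧ DomLE A ν lam ∧ ν ≠ μ ∧ ν ≠ lam := by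
    by_contra h
    exact hcov ⟨hμ, hlam, ⟨m, hm⟩, hne, h⟩
  have hsplit : ∀ j, m₁ j + m₂ j = m j := by
    have : A *ᵥ (fun j => ((m₁ j + m₂ j : ℕ) : ℤ)) = A *ᵥ (fun j => (m j : ℤ)) := by
      simp only [Nat.cast_add, ← sum_smul_colA, add_smul, Finset.sum_add_distrib, ← hm₁, ← hm₂,
        ← hm]
      abel
    exact fun j => by exact_mod_cast congrFun (hA this) j
  have hsum : ∑ j, m₁ j + ∑ j, m₂ j = s := by
    rw [← hs, ← Finset.sum_add_distrib]
    exact Finset.sum_congr rfl fun j _ => hsplit j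
  have h₁ := Nat.pos_of_ne_zero (mt (eq_of_sum_coeffs_eq_zero A hm₁) hνμ.symm)
  have h₂ := Nat.pos_of_ne_zero (mt (eq_of_sum_coeffs_eq_zero A hm₂) hνlam)
  exact (ih _ (by omega) hlam hν hνlam m₂ hm₂ rfl).trans
    (ih _ (by omega) hν hμ hνμ.symm m₁ hm₁ rfl)

end Dominance

lemma exists_nat_mul_eq_intCast {ι : Type*} [Fintype ι] (q : ι → ℚ) :
    ∃ D : ℕ, 0 < D ∧ ∃ z : ι → ℤ, ∀ i, (D : ℚ) * q i = z i := by
  refine ⟨∏ i, (q i).den, Finset.prod_pos fun i _ => (q i).den_pos, ?_⟩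
  choose k hk using fun i => Finset.dvd_prod_of_mem (fun j => (q j).den) (Finset.mem_univ i)
  refine ⟨fun i => (q i).num * k i, fun i => ?_⟩
  rw [hk i]
  push_cast
  linear_combination (k i : ℚ) * Rat.den_mul_eq_num (q i)

theorem exists_cartanForm_isSymm_pos {n : ℕ} (A : Matrix (Fin n) (Fin n) ℤ) {d : Fin n → ℚ}
    (hsym : ∀ i j, d i * (A i j : ℚ) = d j * A j i)
    (hpos : ∀ x : Fin n → ℚ, x ≠ 0 → 0 < ∑ i, ∑ j, d i * (A i j : ℚ) * x i * x j) :
    ∃ e : Fin n → ℤ, (cartanForm A e).IsSymm ∧ ∀ x, x ≠ 0 → 0 < cartanForm A e x x := by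
  obtain ⟨D, hD, e, he⟩ := exists_nat_mul_eq_intCast d
  have hsym' : ∀ i j, e i * A i j = e j * A j i := fun i j => by
    have := congrArg ((D : ℚ) * ·) (hsym i j)
    simp only [← mul_assoc, he] at this
    exact_mod_cast this
  refine ⟨e, ⟨fun x y => ?_⟩, fun x hx => ?_⟩
  · rw [cartanForm_apply, cartanForm_apply, Finset.sum_comm]
    exact Finset.sum_congr rfl fun i _ => Finset.sum_congr rfl fun j _ => by
      rw [hsym' j i]; ring
  · have hxq : (fun i => (x i : ℚ)) ≠ 0 := fun h => hx (funext fun i => by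
      simpa using congrFun h i)
    have := mul_pos (Nat.cast_pos.2 hD) (hpos _ hxq)
    rw [cartanForm_apply]
    simp only [Finset.mul_sum, ← mul_assoc, he] at this
    exact_mod_cast this

theorem stmt16_general (n : ℕ) (A : Matrix (Fin n) (Fin n) ℤ)
    -- `A` is a generalized Cartan matrix …
    (hdiag : ∀ i, A i i = 2)
    (hoff : ∀ i j, i ≠ j → A i j ≤ 0)
    -- … of finite type (symmetrizable with positive definite symmetrization) …
    (hfin : ∃ d : Fin n → ℚ, (∀ i, 0 < d i) ∧ (∀ i j, d i * (A i j : ℚ) = d j * A j i) ∧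
      ∀ x : Fin n → ℚ, x ≠ 0 → 0 < ∑ i, ∑ j, d i * (A i j : ℚ) * x i * x j)
    (lam μ : Fin n → ℤ) (hdl : IsDom lam) (hdm : IsDom μ)
    (hle : DomLE A μ lam) (hne : μ ≠ lam) :
    ∃ (k : ℕ) (c : ℕ → (Fin n → ℤ)), 0 < k ∧ c 0 = lam ∧ c k = μ ∧
      (∀ i < k, IsDom (c i)) ∧ IsDom (c k) ∧
      ∀ i < k, Covers A (c (i + 1)) (c i) ∧ IsPosRoot A (c i - c (i + 1)) := by
  obtain ⟨d, -, hsym, hpos⟩ := hfin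
  obtain ⟨e, hB, hBpos⟩ := exists_cartanForm_isSymm_pos A hsym hpos
  have hA := mulVec_injective_of_cartanForm_pos hBpos
  obtain ⟨k, c, hk, hc0, hck, hcov⟩ := (transGen_covers_of_domLE hA hdl hdm hle hne).exists_seq
  exact ⟨k, c, hk, hc0, hck, fun i hi => (hcov i hi).2.1, hck ▸ hdm,
    fun i hi => ⟨hcov i hi, (hcov i hi).isPosRoot hdiag hoff hB hBpos⟩⟩

theorem stmt16 (n : ℕ) (A : Matrix (Fin n) (Fin n) ℤ)
    -- `A` is a generalized Cartan matrix …
    (hdiag : ∀ i, A i i = 2)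
    (hoff : ∀ i j, i ≠ j → A i j ≤ 0)
    (hzero : ∀ i j, A i j = 0 ↔ A j i = 0)
    -- … of finite type (symmetrizable with positive definite symmetrization) …
    (hfin : ∃ d : Fin n → ℚ, (∀ i, 0 < d i) ∧ (∀ i j, d i * (A i j : ℚ) = d j * A j i) ∧
      ∀ x : Fin n → ℚ, x ≠ 0 → 0 < ∑ i, ∑ j, d i * (A i j : ℚ) * x i * x j)
    -- … and indecomposable (so that it corresponds to a *simple* Lie algebra).
    (hconn : ∀ s : Set (Fin n), s.Nonempty → s ≠ Set.univ → ∃ i ∈ s, ∃ j, j ∉ s ∧ A i j ≠ 0)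
    (lam μ : Fin n → ℤ) (hdl : IsDom lam) (hdm : IsDom μ)
    (hle : DomLE A μ lam) (hne : μ ≠ lam) :
    ∃ (k : ℕ) (c : ℕ → (Fin n → ℤ)), 0 < k ∧ c 0 = lam ∧ c k = μ ∧
      (∀ i < k, IsDom (c i)) ∧ IsDom (c k) ∧
      ∀ i < k, Covers A (c (i + 1)) (c i) ∧ IsPosRoot A (c i - c (i + 1)) :=
  stmt16_general n A hdiag hoff hfin lam μ hdl hdm hle hne
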